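/- arXiv:2302.10171 — 6 statements merged into one kernel-verified Lean document; each statement's English description precedes it below -/
import Mathlib

section
/- A sequence of real numbers (with ∞ allowed) λ₁,…,λₙ satisfies λᵢ ≥ min(λᵢ₋₁, λᵢ₊₁) for all i (with λ₀ = λₙ₊₁ = ∞) if and only if there exist x₁,…,xₙ₋₁ in ℝ ∪ {∞} such that λᵢ = min(xᵢ, xᵢ₋₁) for every i (with x₀ = xₙ = ∞). -/
/-! The witness is `xᵢ = max (λᵢ, λᵢ₊₁)`: when `λᵢ` is at least one of its neighbours,
`min (max (λᵢ, λᵢ₊₁), max (λᵢ₋₁, λᵢ)) = λᵢ`. Conversely `λᵢ₋₁ ≤ xᵢ₋₁` and `λᵢ₊₁ ≤ xᵢ`,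
so `min (λᵢ₋₁, λᵢ₊₁) ≤ min (xᵢ₋₁, xᵢ) = λᵢ`; at the ends `x₀ = xₙ = ∞` makes these trivial. -/

section

variable {α : Type*} [LinearOrder α]

theorem min_max_max_eq_of_min_le {a b c : α} (h : min a c ≤ b) :
    min (max b c) (max a b) = b := by
  refine le_antisymm ?_ (le_min (le_max_left _ _) (le_max_right _ _))
  rcases min_le_iff.mp h with hab | hcb
  · exact min_le_of_right_le (max_le hab le_rfl)
  · exact min_le_of_left_le (max_le le_rfl hcb)

variable [OrderTop α]

theorem exists_eq_min_adjacent_of_min_neighbours_le (n : ℕ) (lam : ℕ → α)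
    (h0 : lam 0 = ⊤) (htop : lam (n + 1) = ⊤)
    (h : ∀ i, 1 ≤ i → i ≤ n → min (lam (i - 1)) (lam (i + 1)) ≤ lam i) :
    ∃ x : ℕ → α, x 0 = ⊤ ∧ x n = ⊤ ∧
      ∀ i, 1 ≤ i → i ≤ n → lam i = min (x i) (x (i - 1)) := by
  refine ⟨fun i => max (lam i) (lam (i + 1)), by simp [h0], by simp [htop], fun i h1 h2 => ?_⟩
  dsimp only
  rw [Nat.sub_add_cancel h1, min_max_max_eq_of_min_le (h i h1 h2)]

theorem min_neighbours_le_of_eq_min_adjacent {n : ℕ} {lam x : ℕ → α}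
    (hx0 : x 0 = ⊤) (hxn : x n = ⊤)
    (hx : ∀ i, 1 ≤ i → i ≤ n → lam i = min (x i) (x (i - 1)))
    {i : ℕ} (h1 : 1 ≤ i) (h2 : i ≤ n) :
    min (lam (i - 1)) (lam (i + 1)) ≤ lam i := by
  have hleft : lam (i - 1) ≤ x (i - 1) := by
    rcases Nat.lt_or_ge (i - 1) 1 with hi | hi
    · rw [Nat.lt_one_iff.mp hi, hx0]
      exact le_top
    · exact (hx (i - 1) hi (by omega)).trans_le (min_le_left _ _)
  have hright : lam (i + 1) ≤ x i := by
    rcases h2.eq_or_lt with rfl | hi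
    · exact hxn ▸ le_top
    · exact (hx (i + 1) (by omega) hi).trans_le (min_le_right _ _)
  rw [hx i h1 h2, min_comm (x i)]
  exact min_le_min hleft hright

end

/-- A sequence `λ₁,…,λₙ` in `ℝ ∪ {∞}` (with the conventions
`λ₀ = λₙ₊₁ = ∞`) satisfies `λᵢ ≥ min (λᵢ₋₁, λᵢ₊₁)` for all `i ∈ [1,n]` iff there exist
`x₁,…,xₙ₋₁` in `ℝ ∪ {∞}` (with `x₀ = xₙ = ∞`) such that `λᵢ = min (xᵢ, xᵢ₋₁)` for all `i`. -/
theorem stmt0 (n : ℕ) (lam : ℕ → WithTop ℝ)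
    (h0 : lam 0 = ⊤) (htop : lam (n + 1) = ⊤) :
    (∀ i, 1 ≤ i → i ≤ n → min (lam (i - 1)) (lam (i + 1)) ≤ lam i) ↔
      ∃ x : ℕ → WithTop ℝ, x 0 = ⊤ ∧ x n = ⊤ ∧
        ∀ i, 1 ≤ i → i ≤ n → lam i = min (x i) (x (i - 1)) :=
  ⟨exists_eq_min_adjacent_of_min_neighbours_le n lam h0 htop,
    fun ⟨_, hx0, hxn, hx⟩ _ h1 h2 => min_neighbours_le_of_eq_min_adjacent hx0 hxn hx h1 h2⟩
end

section
/- Let M be a rank-1 matroid and N a corank-1 matroid on [n] forming a flag matroid (M, N). The (translated) flag matroid polytope P = conv{e_i − e_j : i a non-loop of M, j a non-coloop of N, i ≠ j, together with 0-vectors from pairs i=j when permitted} intersects the interior of the translated polytope Δ(1,n−1;n) if and only if there exists an element of [n] which is simultaneously a non-loop of M and a non-coloop of N. -/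
/-- The translated vertex `e_j - e_i` of `Δ(1,n-1;n)` (one coordinate `+1` at `j`,
one coordinate `-1` at `i`, all others `0`). -/
def hollowVertex {n : ℕ} (j i : Fin n) : Fin n → ℝ :=
  fun k => (if k = j then 1 else 0) - (if k = i then 1 else 0)

lemma hv_sum_J {n : ℕ} (J : Finset (Fin n)) (j i : Fin n) :
    ∑ k ∈ J, hollowVertex j i k
      = (if j ∈ J then (1:ℝ) else 0) - (if i ∈ J then 1 else 0) := by
  simp [hollowVertex, Finset.sum_sub_distrib, Finset.sum_ite_eq' J]

lemma sumJ_linear {n : ℕ} (J : Finset (Fin n)) :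
    IsLinearMap ℝ (fun x : Fin n → ℝ => ∑ k ∈ J, x k) :=
  ⟨fun x y => by simp [Finset.sum_add_distrib],
   fun c x => by simp [Finset.mul_sum]⟩

lemma zero_mem_Q {n : ℕ} (hn : 2 ≤ n) :
    (0 : Fin n → ℝ) ∈ convexHull ℝ {f | ∃ i j : Fin n, i ≠ j ∧ f = hollowVertex j i} := by
  have h01 : (⟨0, by omega⟩ : Fin n) ≠ ⟨1, by omega⟩ := by simp [Fin.ext_iff]
  have h1 : hollowVertex (⟨1, by omega⟩ : Fin n) ⟨0, by omega⟩ ∈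
      convexHull ℝ {f | ∃ i j : Fin n, i ≠ j ∧ f = hollowVertex j i} :=
    subset_convexHull ℝ _ ⟨_, _, h01, rfl⟩
  have h2 : hollowVertex (⟨0, by omega⟩ : Fin n) ⟨1, by omega⟩ ∈
      convexHull ℝ {f | ∃ i j : Fin n, i ≠ j ∧ f = hollowVertex j i} :=
    subset_convexHull ℝ _ ⟨_, _, h01.symm, rfl⟩
  have := (convex_convexHull ℝ {f | ∃ i j : Fin n, i ≠ j ∧ f = hollowVertex j i})
    h1 h2 (by norm_num : (0:ℝ) ≤ 1/2) (by norm_num : (0:ℝ) ≤ 1/2) (by norm_num)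
  convert this using 1
  funext m
  simp [hollowVertex]
  ring

lemma small_mem_Q {n : ℕ} (hn : 2 ≤ n) (z : Fin n → ℝ) (hz0 : ∑ k, z k = 0)
    (hz1 : ∑ k, |z k| ≤ 1) :
    z ∈ convexHull ℝ {f | ∃ i j : Fin n, i ≠ j ∧ f = hollowVertex j i} := by
  set Vq : Set (Fin n → ℝ) := {f | ∃ i j : Fin n, i ≠ j ∧ f = hollowVertex j i} with hVq
  set k0 : Fin n := ⟨0, by omega⟩ with hk0
  set S : ℝ := ∑ k ∈ Finset.univ.erase k0, |z k| with hS
  have hS1 : S ≤ 1 := by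
    refine le_trans ?_ hz1
    exact Finset.sum_le_sum_of_subset_of_nonneg (Finset.erase_subset _ _)
      (fun k _ _ => abs_nonneg _)
  have hS0 : 0 ≤ S := Finset.sum_nonneg fun k _ => abs_nonneg _
  set w : Fin n → ℝ := fun k => if k = k0 then 1 - S else |z k| with hw
  set p : Fin n → (Fin n → ℝ) := fun k =>
    if k = k0 then 0 else if 0 ≤ z k then hollowVertex k k0 else hollowVertex k0 k with hp
  have hwsum : ∑ k, w k = 1 := by
    rw [← Finset.add_sum_erase _ w (Finset.mem_univ k0)]
    have : ∑ k ∈ Finset.univ.erase k0, w k = S := by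
      refine Finset.sum_congr rfl fun k hk => ?_
      simp [hw, Finset.ne_of_mem_erase hk]
    rw [this]
    simp [hw]
  have hcomb : ∑ k, w k • p k = z := by
    rw [← Finset.add_sum_erase _ (fun k => w k • p k) (Finset.mem_univ k0)]
    have hpk0 : p k0 = 0 := by simp [hp]
    rw [hpk0, smul_zero, zero_add]
    funext m
    rw [Finset.sum_apply]
    have hterm : ∀ k ∈ Finset.univ.erase k0,
        (w k • p k) m = z k * ((if m = k then (1:ℝ) else 0) - (if m = k0 then 1 else 0)) := by
      intro k hk
      have hkk0 : k ≠ k0 := Finset.ne_of_mem_erase hk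
      by_cases hzk : 0 ≤ z k
      · simp [hw, hp, hkk0, hzk, hollowVertex, abs_of_nonneg hzk]
      · push_neg at hzk
        simp [hw, hp, hkk0, not_le.mpr hzk, hollowVertex, abs_of_neg hzk]
        ring
    rw [Finset.sum_congr rfl hterm]
    have hsum2 : ∑ k ∈ Finset.univ.erase k0, z k = - z k0 := by
      rw [Finset.sum_erase_eq_sub (Finset.mem_univ k0), hz0]
      ring
    rw [show (fun k => z k * ((if m = k then (1:ℝ) else 0) - (if m = k0 then 1 else 0)))
        = fun k => (if m = k then z k else 0) - (if m = k0 then 1 else 0) * z k by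
      funext k; by_cases h : m = k <;> by_cases h2 : k = k0 <;> simp [h, h2] <;> ring]
    rw [Finset.sum_sub_distrib, Finset.sum_ite_eq, ← Finset.mul_sum, hsum2]
    by_cases hm : m = k0
    · simp [hm]
    · simp [hm, Finset.mem_erase, hm]
  rw [← hcomb]
  refine (convex_convexHull ℝ Vq).sum_mem (fun k _ => ?_) hwsum (fun k _ => ?_)
  · by_cases h : k = k0 <;> simp [hw, h, hS1, abs_nonneg, sub_nonneg]
  · by_cases h : k = k0
    · rw [hp]; simp only [h, if_pos rfl]
      exact zero_mem_Q hn
    · refine subset_convexHull ℝ Vq ?_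
      by_cases hzk : 0 ≤ z k
      · exact ⟨k0, k, Ne.symm h, by simp [hp, h, hzk]⟩
      · exact ⟨k, k0, h, by simp [hp, h, hzk]⟩

/-- members of the affine span of `Q` have coordinate sum zero. -/
lemma span_sum_zero {n : ℕ} (x : Fin n → ℝ)
    (hx : x ∈ affineSpan ℝ (convexHull ℝ {f | ∃ i j : Fin n, i ≠ j ∧ f = hollowVertex j i})) :
    ∑ k, x k = 0 := by
  set g : (Fin n → ℝ) →ₗ[ℝ] ℝ :=
    { toFun := fun x => ∑ k, x k
      map_add' := fun x y => by simp [Finset.sum_add_distrib]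
      map_smul' := fun c x => by simp [Finset.mul_sum] } with hg
  rw [affineSpan_convexHull] at hx
  have h1 : affineSpan ℝ {f | ∃ i j : Fin n, i ≠ j ∧ f = hollowVertex j i}
      ≤ (LinearMap.ker g).toAffineSubspace := by
    rw [affineSpan_le]
    rintro f ⟨i, j, hij, rfl⟩
    rw [SetLike.mem_coe, Submodule.mem_toAffineSubspace, LinearMap.mem_ker]
    show ∑ k, hollowVertex j i k = 0
    have := hv_sum_J (Finset.univ) j i
    simpa using this
  have := h1 hx
  rwa [Submodule.mem_toAffineSubspace, LinearMap.mem_ker] at this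

lemma zero_mem_intrinsic {n : ℕ} (hn : 2 ≤ n) :
    (0 : Fin n → ℝ) ∈ intrinsicInterior ℝ
      (convexHull ℝ {f | ∃ i j : Fin n, i ≠ j ∧ f = hollowVertex j i}) := by
  set Q : Set (Fin n → ℝ) := convexHull ℝ {f | ∃ i j : Fin n, i ≠ j ∧ f = hollowVertex j i}
    with hQ
  have h0Q : (0 : Fin n → ℝ) ∈ Q := zero_mem_Q hn
  have h0span : (0 : Fin n → ℝ) ∈ affineSpan ℝ Q := subset_affineSpan ℝ Q h0Q
  rw [mem_intrinsicInterior]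
  refine ⟨⟨0, h0span⟩, ?_, rfl⟩
  rw [mem_interior]
  refine ⟨(↑) ⁻¹' (Metric.ball (0 : Fin n → ℝ) (1 / n)), ?_, ?_, ?_⟩
  · rintro ⟨z, hzspan⟩ hzball
    simp only [Set.mem_preimage] at hzball ⊢
    rw [Metric.mem_ball, dist_zero_right] at hzball
    refine small_mem_Q hn z (span_sum_zero z hzspan) ?_
    have hnorm : ∀ k, |z k| ≤ ‖z‖ := fun k => by
      simpa using norm_le_pi_norm z k
    calc ∑ k, |z k| ≤ ∑ _k : Fin n, ‖z‖ := Finset.sum_le_sum fun k _ => hnorm k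
      _ = n * ‖z‖ := by simp [Finset.sum_const, mul_comm]
      _ ≤ n * (1 / n) := by
          refine mul_le_mul_of_nonneg_left (le_of_lt hzball) (by positivity)
      _ = 1 := by field_simp
  · exact Metric.isOpen_ball.preimage continuous_subtype_val
  · simp only [Set.mem_preimage]
    simpa using by positivity


/-- Let `(M,N)` be a hollow flag matroid on `[n]`, encoded by the set
`I` of non-loops of `M` (nonempty) and the set `J` of non-coloops of `N` (nonempty),
with `|I ∩ J| ≠ 1`.  Its translated polytope `conv{e_j - e_i : i ∈ I, j ∈ J, i ≠ j}`
intersects the (intrinsic) interior of the translated `Δ(1,n-1;n)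
= conv{e_j - e_i : i ≠ j}` if and only if some element of `[n]` is simultaneously a
non-loop of `M` and a non-coloop of `N`, i.e. `I ∩ J ≠ ∅`. -/
theorem stmt4 (n : ℕ) (hn : 2 ≤ n) (I J : Finset (Fin n))
    (hI : I.Nonempty) (hJ : J.Nonempty) (hflag : (I ∩ J).card ≠ 1) :
    (convexHull ℝ {f | ∃ i ∈ I, ∃ j ∈ J, i ≠ j ∧ f = hollowVertex j i} ∩
        intrinsicInterior ℝ
          (convexHull ℝ {f | ∃ i j : Fin n, i ≠ j ∧ f = hollowVertex j i})).Nonempty ↔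
      (I ∩ J).Nonempty := by
  set Vq : Set (Fin n → ℝ) := {f | ∃ i j : Fin n, i ≠ j ∧ f = hollowVertex j i} with hVq
  set Vp : Set (Fin n → ℝ) := {f | ∃ i ∈ I, ∃ j ∈ J, i ≠ j ∧ f = hollowVertex j i} with hVp
  constructor
  · rintro ⟨x, hxP, hxI⟩
    by_contra hempty
    have hdisj : Disjoint I J := by
      rwa [Finset.not_nonempty_iff_eq_empty, ← Finset.disjoint_iff_inter_eq_empty] at hempty
    have hxQ : x ∈ convexHull ℝ Vq := intrinsicInterior_subset hxI
    -- the functional ∑_{k ∈ J} equals 1 on P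
    have hxJ1 : ∑ k ∈ J, x k = 1 := by
      have : convexHull ℝ Vp ⊆ {y : Fin n → ℝ | ∑ k ∈ J, y k = 1} := by
        refine convexHull_min ?_ (convex_hyperplane (sumJ_linear J) 1)
        rintro f ⟨i, hi, j, hj, hij, rfl⟩
        have hiJ : i ∉ J := fun h => (Finset.disjoint_left.mp hdisj hi) h
        simp [Set.mem_setOf_eq, hv_sum_J, hj, hiJ]
      exact this hxP
    -- the functional ∑_{k ∈ J} is ≤ 1 on Q
    have hQle : ∀ y ∈ convexHull ℝ Vq, ∑ k ∈ J, y k ≤ 1 := by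
      intro y hy
      have : convexHull ℝ Vq ⊆ {y : Fin n → ℝ | ∑ k ∈ J, y k ≤ 1} := by
        refine convexHull_min ?_ (convex_halfSpace_le (sumJ_linear J) 1)
        rintro f ⟨i, j, hij, rfl⟩
        rw [Set.mem_setOf_eq, hv_sum_J]
        by_cases h1 : j ∈ J <;> by_cases h2 : i ∈ J <;> simp [h1, h2]
      exact this hy
    -- a vertex of Q with functional value ≤ 0
    obtain ⟨j0, hj0I⟩ := hI
    obtain ⟨i0, hi0⟩ := Fintype.exists_ne_of_one_lt_card (by simpa using by omega : 1 < Fintype.card (Fin n)) j0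
    set q : Fin n → ℝ := hollowVertex j0 i0 with hq
    have hqQ : q ∈ convexHull ℝ Vq := subset_convexHull ℝ Vq ⟨i0, j0, hi0, rfl⟩
    have hj0J : j0 ∉ J := fun h => (Finset.disjoint_left.mp hdisj hj0I) h
    have hq0 : ∑ k ∈ J, q k ≤ 0 := by
      rw [hq, hv_sum_J]
      by_cases h2 : i0 ∈ J <;> simp [hj0J, h2]
    -- extract an ambient open set from the intrinsic interior
    rw [mem_intrinsicInterior] at hxI
    obtain ⟨y, hyint, hyx⟩ := hxI
    obtain ⟨W, hWopen, hWeq⟩ := isOpen_induced_iff.mp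
      (isOpen_interior : IsOpen (interior ((↑) ⁻¹' (convexHull ℝ Vq) : Set (affineSpan ℝ (convexHull ℝ Vq)))))
    have hxW : x ∈ W := by
      have : y ∈ (↑) ⁻¹' W := by rw [← hWeq] at hyint; exact hyint
      rw [Set.mem_preimage, hyx] at this; exact this
    obtain ⟨ε, hε, hball⟩ := Metric.isOpen_iff.mp hWopen x hxW
    set t : ℝ := ε / (2 * (‖x - q‖ + 1)) with ht_def
    have ht : 0 < t := by positivity
    set z : Fin n → ℝ := t • (x - q) + x with hz
    have hznear : dist z x < ε := by
      rw [hz, dist_eq_norm]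
      have : t • (x - q) + x - x = t • (x - q) := by abel
      rw [this, norm_smul, Real.norm_eq_abs, abs_of_pos ht, ht_def]
      rw [div_mul_eq_mul_div, div_lt_iff₀ (by positivity)]
      nlinarith [norm_nonneg (x - q)]
    have hzspan : z ∈ affineSpan ℝ (convexHull ℝ Vq) := by
      have hxA : x ∈ affineSpan ℝ (convexHull ℝ Vq) := subset_affineSpan ℝ _ hxQ
      have hqA : q ∈ affineSpan ℝ (convexHull ℝ Vq) := subset_affineSpan ℝ _ hqQ
      exact (affineSpan ℝ (convexHull ℝ Vq)).smul_vsub_vadd_mem t hxA hqA hxA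
    have hzQ : z ∈ convexHull ℝ Vq := by
      have hmem : (⟨z, hzspan⟩ : affineSpan ℝ (convexHull ℝ Vq)) ∈ (↑) ⁻¹' W := by
        rw [Set.mem_preimage]
        exact hball (Metric.mem_ball.mpr hznear)
      rw [hWeq] at hmem
      have := interior_subset hmem
      exact this
    have hle := hQle z hzQ
    have hcalc : ∑ k ∈ J, z k = 1 + t * (1 - ∑ k ∈ J, q k) := by
      have : ∀ k, z k = t * (x k - q k) + x k := fun k => rfl
      simp only [this]
      rw [Finset.sum_add_distrib, ← Finset.mul_sum, Finset.sum_sub_distrib, hxJ1]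
      ring
    rw [hcalc] at hle
    nlinarith
  · intro hne
    have hcard : 1 < (I ∩ J).card := by
      have := Finset.card_pos.mpr hne
      omega
    obtain ⟨a, ha, b, hb, hab⟩ := Finset.one_lt_card.mp hcard
    obtain ⟨haI, haJ⟩ := Finset.mem_inter.mp ha
    obtain ⟨hbI, hbJ⟩ := Finset.mem_inter.mp hb
    have h1 : hollowVertex b a ∈ convexHull ℝ Vp :=
      subset_convexHull ℝ Vp ⟨a, haI, b, hbJ, hab, rfl⟩
    have h2 : hollowVertex a b ∈ convexHull ℝ Vp :=
      subset_convexHull ℝ Vp ⟨b, hbI, a, haJ, hab.symm, rfl⟩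
    have h0P : (0 : Fin n → ℝ) ∈ convexHull ℝ Vp := by
      have := (convex_convexHull ℝ Vp) h1 h2
        (by norm_num : (0:ℝ) ≤ 1/2) (by norm_num : (0:ℝ) ≤ 1/2) (by norm_num)
      convert this using 1
      funext m
      simp [hollowVertex]
      ring
    exact ⟨0, h0P, zero_mem_intrinsic hn⟩
end

section
/- Let v ∈ Symₙ be a permutation in which 2, 3, …, n−1 appear in ascending order in one-line notation and such that v⁻¹(n) < v⁻¹(1). Set k = v⁻¹(1) and m = v⁻¹(n). Then the word (τ₁, τ₂, …, τ_{k−2}, τ_{n−1}, τ_{n−2}, …, τ_m) is a reduced word for v, where τᵢ denotes the adjacent transposition (i, i+1). -/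
/-- The adjacent transposition `τᵢ = (i, i+1)` as a permutation of `ℕ`
(acting on `{1,…,n}`). -/
def tau (i : ℕ) : Equiv.Perm ℕ := Equiv.swap i (i + 1)

lemma tau_apply (i x : ℕ) : tau i x = if x = i then i + 1 else if x = i + 1 then i else x := by
  simp [tau, Equiv.swap_apply_def]

lemma ascProd (c x : ℕ) :
    (((List.range' 1 c).map tau).prod) x =
      if x = c + 1 then 1 else if 1 ≤ x ∧ x ≤ c then x + 1 else x := by
  induction c generalizing x with
  | zero => simp; split_ifs <;> omega
  | succ c ih =>
    rw [List.range'_concat, List.map_append, List.prod_append]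
    simp only [List.map_cons, List.map_nil, List.prod_cons, List.prod_nil, mul_one,
      Equiv.Perm.mul_apply]
    rw [show 1 + 1 * c = c + 1 by omega, tau_apply]
    split_ifs <;> rw [ih] <;> split_ifs <;> omega

lemma descProd (m d x : ℕ) :
    ((((List.range' m d).reverse).map tau).prod) x =
      if x = m then m + d else if m < x ∧ x ≤ m + d then x - 1 else x := by
  induction d generalizing x with
  | zero => simp; split_ifs <;> omega
  | succ d ih =>
    rw [List.range'_concat, List.reverse_append]
    simp only [List.reverse_cons, List.reverse_nil, List.nil_append, List.singleton_append,
      List.map_cons, List.prod_cons, Equiv.Perm.mul_apply]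
    rw [show m + 1 * d = m + d by omega, ih, tau_apply]
    split_ifs <;> omega

def invSet (n : ℕ) (σ : Equiv.Perm ℕ) : Finset (ℕ × ℕ) :=
  (Finset.Icc 1 n ×ˢ Finset.Icc 1 n).filter fun p => p.1 < p.2 ∧ σ p.2 < σ p.1

lemma swap_lemma (i x y : ℕ) (hxy : x < y) (h : tau i y < tau i x) : x = i ∧ y = i + 1 := by
  rw [tau_apply, tau_apply] at h; split_ifs at h <;> omega

lemma invSet_one (n : ℕ) : invSet n 1 = ∅ := by
  ext p; simp [invSet]; intro h; obtain ⟨_, h1, h2⟩ := Finset.mem_filter.mp h; omega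

lemma invSet_step (n i : ℕ) (σ : Equiv.Perm ℕ) :
    invSet n (tau i * σ) ⊆ insert (σ⁻¹ i, σ⁻¹ (i+1)) (invSet n σ) := by
  intro p hp
  change p ∈ invSet n (tau i * σ) at hp
  rw [invSet, Finset.mem_filter] at hp
  simp only [invSet, Finset.mem_filter, Finset.mem_product, Equiv.Perm.mul_apply,
    Finset.mem_insert] at hp ⊢
  obtain ⟨hmem, h3, h4⟩ := hp
  by_cases hσ : σ p.2 < σ p.1
  · right; exact ⟨hmem, h3, hσ⟩
  · left
    have hne : σ p.1 ≠ σ p.2 := fun h => (Nat.ne_of_lt h3) (σ.injective h)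
    have hlt : σ p.1 < σ p.2 := lt_of_le_of_ne (not_lt.mp hσ) hne
    obtain ⟨e1, e2⟩ := swap_lemma i (σ p.1) (σ p.2) hlt h4
    have hh1 : p.1 = σ⁻¹ i := by rw [← e1]; simp
    have hh2 : p.2 = σ⁻¹ (i+1) := by rw [← e2]; simp
    rw [← hh1, ← hh2]

lemma invSet_prod_le (n : ℕ) : ∀ l : List ℕ, (invSet n (l.map tau).prod).card ≤ l.length := by
  intro l
  induction l with
  | nil => simp [invSet_one]
  | cons i t ih =>
    simp only [List.map_cons, List.prod_cons, List.length_cons]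
    calc (invSet n (tau i * (t.map tau).prod)).card
        ≤ (insert (((t.map tau).prod)⁻¹ i, ((t.map tau).prod)⁻¹ (i+1))
            (invSet n (t.map tau).prod)).card :=
          Finset.card_le_card (invSet_step n i _)
      _ ≤ (invSet n (t.map tau).prod).card + 1 := Finset.card_insert_le _ _
      _ ≤ t.length + 1 := by omega

/-- Let `v ∈ Symₙ` (a permutation of `ℕ` supported on `{1,…,n}`) in
which `2,3,…,n−1` appear in ascending order in one-line notation and with
`v⁻¹(n) < v⁻¹(1)`.  Set `k = v⁻¹(1)`, `m = v⁻¹(n)`.  Then the word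
`(τ₁,…,τ_{k−2}, τ_{n−1}, τ_{n−2},…,τ_m)` is a word for `v` (product by
precomposition) of minimal length among all words for `v` in the generators
`τ₁,…,τ_{n−1}`, i.e. it is a reduced word for `v`. -/
theorem stmt6 (n : ℕ) (hn : 2 ≤ n) (v : Equiv.Perm ℕ)
    (hsupp : ∀ x, x ∉ Finset.Icc 1 n → v x = x)
    (hasc : ∀ a b, 2 ≤ a → a < b → b ≤ n - 1 → v⁻¹ a < v⁻¹ b)
    (hkm : v⁻¹ n < v⁻¹ 1) :
    (((List.range' 1 (v⁻¹ 1 - 2) ++ (List.range' (v⁻¹ n) (n - v⁻¹ n)).reverse).map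
        tau).prod = v) ∧
    (∀ l : List ℕ, (∀ i ∈ l, 1 ≤ i ∧ i ≤ n - 1) → (l.map tau).prod = v →
      (List.range' 1 (v⁻¹ 1 - 2) ++ (List.range' (v⁻¹ n) (n - v⁻¹ n)).reverse).length ≤
        l.length) := by
  classical
  set k := v⁻¹ 1 with hkdef
  set m := v⁻¹ n with hmdef
  have hvk : v k = 1 := v.apply_symm_apply 1
  have hvm : v m = n := v.apply_symm_apply n
  have hmeminv : ∀ x, 1 ≤ x → x ≤ n → 1 ≤ v⁻¹ x ∧ v⁻¹ x ≤ n := by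
    intro x h1 h2
    by_contra h
    have hx : v⁻¹ x ∉ Finset.Icc 1 n := by simp only [Finset.mem_Icc]; omega
    have h5 := hsupp _ hx
    rw [show ∀ y, v (v⁻¹ y) = y from v.apply_symm_apply] at h5
    simp only [Finset.mem_Icc] at hx; omega
  have hmemv : ∀ x, 1 ≤ x → x ≤ n → 1 ≤ v x ∧ v x ≤ n := by
    intro x h1 h2
    by_contra h
    have hx : v x ∉ Finset.Icc 1 n := by simp only [Finset.mem_Icc]; omega
    have h5 := hsupp _ hx
    have h6 := v.injective h5
    simp only [Finset.mem_Icc] at hx; omega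
  have hfixinv : ∀ x, x ∉ Finset.Icc 1 n → v⁻¹ x = x := by
    intro x hx
    have h5 := hsupp x hx
    have := congrArg (fun t => v⁻¹ t) h5
    simpa using this.symm
  have hm1 : 1 ≤ m := (hmeminv n (by omega) le_rfl).1
  have hkn : k ≤ n := (hmeminv 1 le_rfl (by omega)).2
  have chain : ∀ d a, 2 ≤ a → a + d ≤ n - 1 → v⁻¹ a + d ≤ v⁻¹ (a + d) := by
    intro d
    induction d with
    | zero => intro a _ _; simp
    | succ d ih =>
      intro a ha hd
      have h1 := ih a ha (by omega)
      have h2 := hasc (a + d) (a + d + 1) (by omega) (by omega) (by omega)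
      have h3 : a + (d + 1) = a + d + 1 := by omega
      rw [h3]; omega
  have hub : ∀ a, 2 ≤ a → a ≤ n - 1 → v⁻¹ a ≤ a + 1 := by
    intro a ha h
    have h1 := chain (n - 1 - a) a ha (by omega)
    rw [show a + (n - 1 - a) = n - 1 by omega] at h1
    have h2 := (hmeminv (n - 1) (by omega) (by omega)).2
    omega
  have hlb : ∀ a, 2 ≤ a → a ≤ n - 1 → a - 1 ≤ v⁻¹ a := by
    intro a ha h
    have h1 := chain (a - 2) 2 le_rfl (by omega)
    rw [show 2 + (a - 2) = a by omega] at h1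
    have h2 := (hmeminv 2 (by omega) (by omega)).1
    omega
  have L1 : ∀ a, 2 ≤ a → a ≤ n - 1 → m < a → a ≤ v⁻¹ a := by
    intro a ha h hma
    by_contra hc
    push_neg at hc
    have h1 := chain (a - (m + 1)) (m + 1) (by omega) (by omega)
    rw [show m + 1 + (a - (m + 1)) = a by omega] at h1
    have h2 := hlb (m + 1) (by omega) (by omega)
    have h3 : v⁻¹ (m + 1) = v⁻¹ n := by rw [← hmdef]; omega
    have h4 := (Equiv.injective _) h3
    omega
  have L2 : ∀ a, 2 ≤ a → a ≤ n - 1 → a < k → v⁻¹ a ≤ a := by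
    intro a ha h hak
    by_contra hc
    push_neg at hc
    have h1 := chain (k - 1 - a) a ha (by omega)
    rw [show a + (k - 1 - a) = k - 1 by omega] at h1
    have h2 := hub (k - 1) (by omega) (by omega)
    have h3 : v⁻¹ (k - 1) = v⁻¹ 1 := by rw [← hkdef]; omega
    have h4 := (Equiv.injective _) h3
    omega
  have hdet : ∀ a, 2 ≤ a → a ≤ n - 1 →
      v⁻¹ a = if a ≤ m then a - 1 else if a < k then a else a + 1 := by
    intro a ha hn1
    have lb := hlb a ha hn1
    have ub := hub a ha hn1
    split_ifs with h1 h2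
    · have hle := L2 a ha hn1 (by omega)
      by_contra hne
      have hge : v⁻¹ a = a := by omega
      have c1 := chain (m - a) a ha (by omega)
      rw [show a + (m - a) = m by omega] at c1
      have hm2 : v⁻¹ m ≠ m := by
        intro hmm
        have := congrArg v hmm
        rw [show ∀ y, v (v⁻¹ y) = y from v.apply_symm_apply] at this
        omega
      have c2 := chain (k - 1 - m) m (by omega) (by omega)
      rw [show m + (k - 1 - m) = k - 1 by omega] at c2
      have u2 := hub (k - 1) (by omega) (by omega)
      have h3 : v⁻¹ (k - 1) = v⁻¹ 1 := by rw [← hkdef]; omega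
      have h4 := (Equiv.injective _) h3
      omega
    · exact le_antisymm (L2 a ha hn1 h2) (L1 a ha hn1 (by omega))
    · have hge := L1 a ha hn1 (by omega)
      by_contra hne
      have heq : v⁻¹ a = a := by omega
      have c1 := chain (a - k) k (by omega) (by omega)
      rw [show k + (a - k) = a by omega] at c1
      have hkne : v⁻¹ k ≠ k := by
        intro hkk
        have := congrArg v hkk
        rw [show ∀ y, v (v⁻¹ y) = y from v.apply_symm_apply] at this
        omega
      have := L1 k (by omega) (by omega) hkm
      omega
  constructor
  · -- the word multiplies to v
    have key : ∀ y, (((List.range' 1 (k - 2) ++ (List.range' m (n - m)).reverse).map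
        tau).prod) (v⁻¹ y) = y := by
      intro y
      rw [List.map_append, List.prod_append, Equiv.Perm.mul_apply, descProd, ascProd]
      by_cases hy0 : y ∉ Finset.Icc 1 n
      · rw [hfixinv y hy0]
        simp only [Finset.mem_Icc] at hy0
        split_ifs <;> omega
      · push_neg at hy0
        simp only [Finset.mem_Icc] at hy0
        rcases eq_or_ne y 1 with h | h
        · subst h
          rw [← hkdef]
          split_ifs <;> omega
        rcases eq_or_ne y n with h2 | h2
        · subst h2
          rw [← hmdef]
          split_ifs <;> omega
        · rw [hdet y (by omega) (by omega)]
          split_ifs <;> omega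
    refine Equiv.ext fun x => ?_
    have h := key (v x)
    rwa [show ∀ y, v⁻¹ (v y) = y from v.symm_apply_apply] at h
  · intro l hl hprod
    have h1 := invSet_prod_le n l
    rw [hprod] at h1
    set T1 := ((Finset.Icc 1 (k - 1)).erase m).image (fun i => (i, k)) with hT1
    set T2 := (Finset.Icc (m + 1) n).image (fun j => (m, j)) with hT2
    have hsub : T1 ∪ T2 ⊆ invSet n v := by
      intro p hp
      simp only [hT1, hT2, Finset.mem_union, Finset.mem_image, Finset.mem_erase,
        Finset.mem_Icc] at hp
      rcases hp with ⟨i, ⟨him, hi1, hi2⟩, rfl⟩ | ⟨j, ⟨hj1, hj2⟩, rfl⟩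
      · simp only [invSet, Finset.mem_filter, Finset.mem_product, Finset.mem_Icc]
        refine ⟨⟨⟨hi1, by omega⟩, by omega, hkn⟩, by omega, ?_⟩
        rw [hvk]
        have hvi := hmemv i hi1 (by omega)
        have hne : v i ≠ 1 := by
          intro hvi1
          have : i = k := v.injective (hvi1.trans hvk.symm)
          omega
        omega
      · simp only [invSet, Finset.mem_filter, Finset.mem_product, Finset.mem_Icc]
        refine ⟨⟨⟨hm1, by omega⟩, by omega, hj2⟩, by omega, ?_⟩
        rw [hvm]
        have hvj := hmemv j (by omega) hj2
        have hne : v j ≠ n := by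
          intro hvjn
          have : j = m := v.injective (hvjn.trans hvm.symm)
          omega
        omega
    have hdisj : Disjoint T1 T2 := by
      rw [Finset.disjoint_left]
      intro p hp1 hp2
      simp only [hT1, hT2, Finset.mem_image, Finset.mem_erase, Finset.mem_Icc] at hp1 hp2
      obtain ⟨i, ⟨him, _, _⟩, rfl⟩ := hp1
      obtain ⟨j, _, hE⟩ := hp2
      have : m = i := congrArg Prod.fst hE
      omega
    have hinjfst : Function.Injective (fun i : ℕ => (i, k)) := by
      intro a b hab
      simpa using congrArg Prod.fst hab
    have hinjsnd : Function.Injective (fun j : ℕ => (m, j)) := by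
      intro a b hab
      simpa using congrArg Prod.snd hab
    have hc1 : T1.card = k - 2 := by
      rw [hT1, Finset.card_image_of_injective _ hinjfst,
        Finset.card_erase_of_mem (by simp only [Finset.mem_Icc]; omega), Nat.card_Icc]
      omega
    have hc2 : T2.card = n - m := by
      rw [hT2, Finset.card_image_of_injective _ hinjsnd, Nat.card_Icc]
      omega
    have hcard := Finset.card_le_card hsub
    rw [Finset.card_union_of_disjoint hdisj, hc1, hc2] at hcard
    simp only [List.length_append, List.length_range', List.length_reverse]
    omega
end

section
/- Suppose w = (τ₁,…,τ_{k−2}, τ_{n−1},…,τ_m) is the standard reduced word of a hollow minimal coset representative v ∈ Symₙ and w' is a subword of w containing both τ_{i−1} and τ_i with τ_{i−1} occurring before τ_i (for some 1 < i < n with i−1 ≤ k−2 and i ≥ m). Then the permutation τ_{i−1}τ_iτ_{i−2}τ_i is not ≤ v in Bruhat order; equivalently, (τ_{i−1}, τ_i, τ_{i−2}, τ_i) is not a subword of w. -/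
/-- Let `w = (τ₁,…,τ_{k−2}, τ_{n−1},…,τ_m)` (written as the list of
indices `[1,…,k−2] ++ [n−1,…,m]`) be the standard reduced word of a hollow minimal
coset representative, and let `w'` be a subword of `w` containing both `τ_{i−1}` and
`τ_i`, with `τ_{i−1}` occurring before `τ_i`, for some `1 < i < n` with
`i − 1 ≤ k − 2` and `m ≤ i`.  Then `(τ_{i−1}, τ_i, τ_{i−2}, τ_i)` is not a subword
of `w` (equivalently, the permutation `τ_{i−1}τ_iτ_{i−2}τ_i` is not `≤ v` in Bruhat
order). -/
theorem stmt9 (n k m i : ℕ) (hn : 2 ≤ n) (hi1 : 1 < i) (hin : i < n)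
    (hik : i - 1 ≤ k - 2) (him : m ≤ i) (hm : 1 ≤ m) (hk : k ≤ n)
    (w' : List ℕ)
    (hw' : w'.Sublist (List.range' 1 (k - 2) ++ (List.range' m (n - m)).reverse))
    (hmem : [i - 1, i].Sublist w') :
    ¬ [i - 1, i, i - 2, i].Sublist
        (List.range' 1 (k - 2) ++ (List.range' m (n - m)).reverse) := by
  intro h
  -- it suffices that [i, i-2, i] is a sublist of the word
  have h2 : [i, i - 2, i].Sublist
      (List.range' 1 (k - 2) ++ (List.range' m (n - m)).reverse) := by
    refine List.Sublist.trans ?_ h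
    exact (List.sublist_cons_self _ _)
  have hii : i - 2 < i := Nat.sub_lt (by omega) (by omega)
  -- ascending part is pairwise <, descending part is pairwise >
  have hA : (List.range' 1 (k - 2)).Pairwise (· < ·) := List.pairwise_lt_range'
  have hB : ((List.range' m (n - m)).reverse).Pairwise (· > ·) := by
    rw [List.pairwise_reverse]
    exact List.pairwise_lt_range'
  rw [List.sublist_append_iff] at h2
  obtain ⟨l₁, l₂, heq, h₁, h₂⟩ := h2
  match l₁, heq with
  | [], heq =>
    -- [i, i-2, i] sublist of descending part: i > i-2 > i, contradiction
    subst heq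
    have := hB.sublist h₂
    simp at this
  | [a], heq =>
    have : l₂ = [i - 2, i] := by
      have h' : [i - 2, i] = l₂ := by simpa using congrArg List.tail heq
      exact h'.symm
    subst this
    have := hB.sublist h₂
    simp at this
    omega
  | [a, b], heq =>
    have ha : a = i ∧ b = i - 2 := by
      constructor
      · have h' : some i = some a := by simpa using congrArg (fun l : List ℕ => l.head?) heq
        simpa using h'.symm
      · have h' : some (i - 2) = some b := by simpa using congrArg (fun l : List ℕ => l.tail.head?) heq
        simpa using h'.symm
    have := hA.sublist h₁
    simp [ha.1, ha.2] at this
    omega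
  | [a, b, c], heq =>
    have ha : a = i ∧ b = i - 2 := by
      constructor
      · have h' : some i = some a := by simpa using congrArg (fun l : List ℕ => l.head?) heq
        simpa using h'.symm
      · have h' : some (i - 2) = some b := by simpa using congrArg (fun l : List ℕ => l.tail.head?) heq
        simpa using h'.symm
    have := hA.sublist h₁
    simp [ha.1, ha.2] at this
    omega
  | a :: b :: c :: d :: l, heq =>
    have := congrArg List.length heq
    simp at this
end

section
/- Valuated gammoids are closed under tropical translation: if μ is the valuated gammoid of (Γ, w, S) and r ∈ ℝ, i ∈ [n] with i not in S, then the function I ↦ μ(I) + r·[i ∈ I] is the valuated gammoid of (Γ, w', S) where w' is obtained by the gauge action: w'(e) = w(e) + r if e leaves vertex i, w'(e) = w(e) − r if e enters vertex i, and w'(e) = w(e) otherwise. -/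
/-- A (simple) directed path in the digraph with edge relation `E`. -/
def IsPathIn (E : ℕ → ℕ → Prop) (p : List ℕ) : Prop :=
  p ≠ [] ∧ p.Chain' E ∧ p.Nodup

/-- The weight of a path. -/
def pathWeight (w : ℕ → ℕ → ℝ) (p : List ℕ) : ℝ :=
  ((p.zip p.tail).map fun q => w q.1 q.2).sum

/-- A linking from `I` onto `S`. -/
def IsLinking (E : ℕ → ℕ → Prop) (I S : Finset ℕ) (P : Finset (List ℕ)) : Prop :=
  (∀ p ∈ P, IsPathIn E p) ∧
  (∀ p ∈ P, ∀ q ∈ P, p ≠ q → ∀ v, v ∈ p → v ∉ q) ∧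
  P.card = I.card ∧
  (∀ p ∈ P, ∃ x ∈ I, p.head? = some x) ∧
  (∀ x ∈ I, ∃ p ∈ P, p.head? = some x) ∧
  (∀ p ∈ P, ∃ y ∈ S, p.getLast? = some y) ∧
  (∀ y ∈ S, ∃ p ∈ P, p.getLast? = some y)

/-- The total weight of a linking. -/
def linkingWeight (w : ℕ → ℕ → ℝ) (P : Finset (List ℕ)) : ℝ :=
  ∑ p ∈ P, pathWeight w p

/-- The valuated-gammoid condition: `μ I` is the minimum weight of a linking from
`I` onto `S` (and `⊤` if no linking exists). -/
def IsValGammoid (E : ℕ → ℕ → Prop) (w : ℕ → ℕ → ℝ) (S : Finset ℕ)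
    (N d : ℕ) (μ : Finset ℕ → WithTop ℝ) : Prop :=
  ∀ I : Finset ℕ, I ⊆ Finset.Icc 1 N → I.card = d →
    IsLeast ({c : WithTop ℝ | ∃ P, IsLinking E I S P ∧
      c = ((linkingWeight w P : ℝ) : WithTop ℝ)} ∪ {⊤}) (μ I)

/-- The gauge action at vertex `i` with parameter `r`: add `r` to all outgoing
edges of `i` and subtract `r` from all incoming edges of `i`. -/
def gaugeWeight (w : ℕ → ℕ → ℝ) (i : ℕ) (r : ℝ) : ℕ → ℕ → ℝ :=
  fun a b => w a b + (if a = i then r else 0) - (if b = i then r else 0)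

lemma gauge_pathWeight (w : ℕ → ℕ → ℝ) (i : ℕ) (r : ℝ) :
    ∀ p : List ℕ, pathWeight (gaugeWeight w i r) p =
      pathWeight w p + (if p.head? = some i then r else 0)
        - (if p.getLast? = some i then r else 0)
  | [] => by simp [pathWeight]
  | [a] => by simp [pathWeight]
  | a :: b :: t => by
    have ih := gauge_pathWeight w i r (b :: t)
    have h1 : pathWeight (gaugeWeight w i r) (a :: b :: t) =
        gaugeWeight w i r a b + pathWeight (gaugeWeight w i r) (b :: t) := by
      simp [pathWeight]
    have h2 : pathWeight w (a :: b :: t) = w a b + pathWeight w (b :: t) := by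
      simp [pathWeight]
    rw [h1, ih, h2, List.getLast?_cons_cons]
    simp only [gaugeWeight, List.head?_cons]
    have : ((some a = some i) ↔ (a = i)) ∧ ((some b = some i) ↔ (b = i)) := by
      constructor <;> simp
    rcases Decidable.em (a = i) <;> rcases Decidable.em (b = i) <;>
      simp_all <;> ring

lemma gauge_linkingWeight (E : ℕ → ℕ → Prop) (w : ℕ → ℕ → ℝ) (S I : Finset ℕ)
    (P : Finset (List ℕ)) (i : ℕ) (r : ℝ) (hiS : i ∉ S)
    (hP : IsLinking E I S P) :
    linkingWeight (gaugeWeight w i r) P =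
      linkingWeight w P + (if i ∈ I then r else 0) := by
  obtain ⟨hpath, hdisj, hcard, hheadI, hIhead, hlastS, -⟩ := hP
  have hlast : ∀ p ∈ P, (if p.getLast? = some i then r else 0) = 0 := by
    intro p hp
    obtain ⟨y, hyS, hy⟩ := hlastS p hp
    have : p.getLast? ≠ some i := by
      rw [hy]; intro h; exact hiS (by simpa using (Option.some_inj.mp h) ▸ hyS)
    simp [this]
  have key : linkingWeight (gaugeWeight w i r) P =
      linkingWeight w P + ∑ p ∈ P, (if p.head? = some i then r else 0) := by
    unfold linkingWeight
    rw [← Finset.sum_add_distrib]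
    apply Finset.sum_congr rfl
    intro p hp
    rw [gauge_pathWeight, hlast p hp, sub_zero]
  rw [key]
  congr 1
  by_cases hiI : i ∈ I
  · obtain ⟨p0, hp0, hhead0⟩ := hIhead i hiI
    rw [Finset.sum_eq_single_of_mem p0 hp0]
    · simp [hhead0, hiI]
    · intro q hq hne
      have : q.head? ≠ some i := by
        intro h
        have hiq : i ∈ q := List.mem_of_mem_head? (by simp [h])
        have hip0 : i ∈ p0 := List.mem_of_mem_head? (by simp [hhead0])
        exact hdisj q hq p0 hp0 hne i hiq hip0
      simp [this]
  · rw [if_neg hiI]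
    apply Finset.sum_eq_zero
    intro p hp
    obtain ⟨x, hxI, hx⟩ := hheadI p hp
    have : p.head? ≠ some i := by
      rw [hx]; intro h; exact hiI ((Option.some_inj.mp h) ▸ hxI)
    simp [this]

/-- Valuated gammoids are closed under tropical translation: if
`μ` is the valuated gammoid of `(Γ, w, S)` and `μ'` the valuated gammoid of
`(Γ, w', S)` for the gauge-transformed weights at a vertex `i ∈ [n]` with `i ∉ S`,
then `μ'(I) = μ(I) + r·[i ∈ I]` for every `|S|`-subset `I` of `[n]`. -/
theorem stmt12 (n : ℕ) (E : ℕ → ℕ → Prop) (w : ℕ → ℕ → ℝ) (S : Finset ℕ)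
    (i : ℕ) (hi : i ∈ Finset.Icc 1 n) (hiS : i ∉ S) (r : ℝ)
    (μ μ' : Finset ℕ → WithTop ℝ)
    (hμ : IsValGammoid E w S n S.card μ)
    (hμ' : IsValGammoid E (gaugeWeight w i r) S n S.card μ') :
    ∀ I : Finset ℕ, I ⊆ Finset.Icc 1 n → I.card = S.card →
      μ' I = μ I + (if i ∈ I then ((r : ℝ) : WithTop ℝ) else 0) := by
  intro I hI hcardI
  set c₀ : ℝ := if i ∈ I then r else 0 with hc₀
  have h1 := hμ I hI hcardI
  have h2 := hμ' I hI hcardI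
  have hcast : (if i ∈ I then ((r : ℝ) : WithTop ℝ) else 0) = ((c₀ : ℝ) : WithTop ℝ) := by
    by_cases h : i ∈ I <;> simp [hc₀, h]
  rw [hcast]
  have hleast : IsLeast ({c : WithTop ℝ | ∃ P, IsLinking E I S P ∧
      c = ((linkingWeight (gaugeWeight w i r) P : ℝ) : WithTop ℝ)} ∪ {⊤})
      (μ I + ((c₀ : ℝ) : WithTop ℝ)) := by
    constructor
    · rcases h1.1 with hmem | hmem
      · obtain ⟨P, hlink, heq⟩ := hmem
        left
        refine ⟨P, hlink, ?_⟩
        rw [gauge_linkingWeight E w S I P i r hiS hlink, heq, ← hc₀]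
        push_cast
        rfl
      · right
        simp only [Set.mem_singleton_iff] at hmem ⊢
        rw [hmem, top_add]
    · intro a ha
      rcases ha with hmem | hmem
      · obtain ⟨P, hlink, heq⟩ := hmem
        rw [heq, gauge_linkingWeight E w S I P i r hiS hlink, ← hc₀]
        have hle : μ I ≤ ((linkingWeight w P : ℝ) : WithTop ℝ) :=
          h1.2 (Or.inl ⟨P, hlink, rfl⟩)
        calc μ I + ((c₀ : ℝ) : WithTop ℝ)
            ≤ ((linkingWeight w P : ℝ) : WithTop ℝ) + ((c₀ : ℝ) : WithTop ℝ) :=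
              add_le_add_left hle _
          _ = (((linkingWeight w P + c₀ : ℝ)) : WithTop ℝ) := by push_cast; rfl
      · simp only [Set.mem_singleton_iff] at hmem
        rw [hmem]; exact le_top
  exact h2.unique hleast
end

section
/- Let λ ∈ (ℝ ∪ {∞})ⁿ satisfy both (a) the tropical incidence relation: the minimum of λ₁,…,λₙ is attained at least twice (or all are ∞), and (b) λᵢ ≥ min(λᵢ₋₁, λᵢ₊₁) for all i (with λ₀ = λₙ₊₁ = ∞). Then λ also satisfies the positivity relation: min over odd i of λᵢ equals min over even i of λᵢ. -/
/-!
Hypothesis (b) with `λ₀ = λₙ₊₁ = ∞` forces the minimum to be attained at two adjacent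
indices: at the first index `i` where the finite minimum `m` is attained, `λᵢ₋₁ > m`, so
(b) gives `λᵢ₊₁ ≤ m`. Adjacent indices have opposite parities, so both parity classes
attain `m`.
-/

namespace Finset

variable {α ι : Type*} [SemilatticeInf α] [OrderTop α]

theorem inf_filter_eq_inf_of_mem {s : Finset ι} {f : ι → α} {p : ι → Prop} [DecidablePred p]
    {j : ι} (hj : j ∈ s) (hpj : p j) (hfj : f j = s.inf f) :
    (s.filter p).inf f = s.inf f :=
  le_antisymm ((inf_le (mem_filter.mpr ⟨hj, hpj⟩)).trans_eq hfj) (inf_mono (filter_subset p s))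

theorem inf_filter_eq_top_of_inf_eq_top {s : Finset ι} {f : ι → α} (p : ι → Prop)
    [DecidablePred p] (hs : s.inf f = ⊤) : (s.filter p).inf f = ⊤ :=
  eq_top_iff.mpr (hs ▸ inf_mono (filter_subset p s))

end Finset

open Finset

variable {α : Type*} [LinearOrder α] [OrderTop α]

theorem exists_adjacent_eq_inf_Icc {n : ℕ} {f : ℕ → α} (h0 : f 0 = ⊤) (htop : f (n + 1) = ⊤)
    (hb : ∀ i, 1 ≤ i → i ≤ n → min (f (i - 1)) (f (i + 1)) ≤ f i)
    (hfin : (Icc 1 n).inf f ≠ ⊤) :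
    ∃ k, k ∈ Icc 1 n ∧ k + 1 ∈ Icc 1 n ∧
      f k = (Icc 1 n).inf f ∧ f (k + 1) = (Icc 1 n).inf f := by
  classical
  set m := (Icc 1 n).inf f
  have hne : (Icc 1 n).Nonempty := nonempty_iff_ne_empty.mpr fun h => hfin (by simp [m, h])
  have hP : ∃ k, 1 ≤ k ∧ k ≤ n ∧ f k = m := by
    obtain ⟨k, hk, hkm⟩ := exists_mem_eq_inf (Icc 1 n) hne f
    exact ⟨k, (mem_Icc.mp hk).1, (mem_Icc.mp hk).2, hkm.symm⟩
  obtain ⟨k, ⟨hk1, hkn, hkm⟩, hmin⟩ : ∃ k, (1 ≤ k ∧ k ≤ n ∧ f k = m) ∧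
      ∀ j < k, ¬(1 ≤ j ∧ j ≤ n ∧ f j = m) :=
    ⟨Nat.find hP, Nat.find_spec hP, fun _ => Nat.find_min hP⟩
  have hm_lt_pred : m < f (k - 1) := by
    rcases (show k = 1 ∨ 2 ≤ k by omega) with rfl | _
    · simpa [h0] using lt_top_iff_ne_top.mpr hfin
    · exact lt_of_le_of_ne (inf_le (mem_Icc.mpr ⟨by omega, by omega⟩))
        fun h => hmin (k - 1) (by omega) ⟨by omega, by omega, h.symm⟩
  have hsucc_le : f (k + 1) ≤ m := by
    have := hb k hk1 hkn
    rw [hkm, min_le_iff] at this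
    exact this.resolve_left hm_lt_pred.not_ge
  have hkn' : k + 1 ≤ n := by
    by_contra h
    obtain rfl : k = n := by omega
    exact hfin (top_le_iff.mp (htop ▸ hsucc_le))
  have hsucc_mem : k + 1 ∈ Icc 1 n := mem_Icc.mpr ⟨by omega, hkn'⟩
  exact ⟨k, mem_Icc.mpr ⟨hk1, hkn⟩, hsucc_mem, hkm,
    le_antisymm hsucc_le (inf_le hsucc_mem)⟩

theorem stmt14_general (n : ℕ) (lam : ℕ → WithTop ℝ)
    (h0 : lam 0 = ⊤) (htop : lam (n + 1) = ⊤)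
    (hb : ∀ i, 1 ≤ i → i ≤ n → min (lam (i - 1)) (lam (i + 1)) ≤ lam i) :
    ((Finset.Icc 1 n).filter fun i => Odd i).inf lam =
      ((Finset.Icc 1 n).filter fun i => Even i).inf lam := by
  by_cases hT : (Icc 1 n).inf lam = ⊤
  · rw [inf_filter_eq_top_of_inf_eq_top _ hT, inf_filter_eq_top_of_inf_eq_top _ hT]
  obtain ⟨k, hk, hk', hkm, hkm'⟩ := exists_adjacent_eq_inf_Icc h0 htop hb hT
  rcases Nat.even_or_odd k with he | ho
  · rw [inf_filter_eq_inf_of_mem hk' he.add_one hkm', inf_filter_eq_inf_of_mem hk he hkm]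
  · rw [inf_filter_eq_inf_of_mem hk ho hkm, inf_filter_eq_inf_of_mem hk' ho.add_one hkm']

/-- Let `λ ∈ (ℝ ∪ {∞})ⁿ` (with `λ₀ = λₙ₊₁ = ∞`) satisfy (a) the
tropical incidence relation (the minimum of `λ₁,…,λₙ` is attained at least twice,
or all are `∞`), and (b) `λᵢ ≥ min (λᵢ₋₁, λᵢ₊₁)` for all `i`.  Then the minimum of
`λᵢ` over odd `i` equals the minimum over even `i` (empty minima being `∞`). -/
theorem stmt14 (n : ℕ) (lam : ℕ → WithTop ℝ)
    (h0 : lam 0 = ⊤) (htop : lam (n + 1) = ⊤)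
    (ha : (∃ i ∈ Finset.Icc 1 n, ∃ j ∈ Finset.Icc 1 n, i ≠ j ∧ lam i = lam j ∧
            ∀ k ∈ Finset.Icc 1 n, lam i ≤ lam k) ∨
          (∀ i ∈ Finset.Icc 1 n, lam i = ⊤))
    (hb : ∀ i, 1 ≤ i → i ≤ n → min (lam (i - 1)) (lam (i + 1)) ≤ lam i) :
    ((Finset.Icc 1 n).filter fun i => Odd i).inf lam =
      ((Finset.Icc 1 n).filter fun i => Even i).inf lam :=
  stmt14_general n lam h0 htop hb
end
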